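/- Assume C has all copowers of X and all powers of Y indexed by subsets of List A, and suppose N_{List A, List A} is (E,M)-noetherian. Let (Q_i, T_i)_{i∈ℕ} be a sequence of pairs of subsets of List A such that for every i either (a) Q_i ⊆ Q_{i+1} and T_i = T_{i+1}, or (b) Q_i = Q_{i+1} and T_i ⊆ T_{i+1}. Then for all but finitely many i the corresponding canonical morphism — u_{Q_i⊆Q_{i+1}, T_i} : N_{Q_i,T_i} → N_{Q_{i+1},T_{i+1}} in case (a), and v_{Q_i, T_i⊆T_{i+1}} : N_{Q_{i+1},T_{i+1}} → N_{Q_i,T_i} in case (b) — is an isomorphism. -/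

import Mathlib

open CategoryTheory

/-- A factorization system `(E, M)` on a category `C`. -/
structure FactSys {C : Type*} [Category C] (E M : MorphismProperty C) : Prop where
  E_iso : ∀ {X Y : C} (f : X ⟶ Y), IsIso f → E f
  M_iso : ∀ {X Y : C} (f : X ⟶ Y), IsIso f → M f
  E_comp : ∀ {X Y Z : C} (f : X ⟶ Y) (g : Y ⟶ Z), E f → E g → E (f ≫ g)
  M_comp : ∀ {X Y Z : C} (f : X ⟶ Y) (g : Y ⟶ Z), M f → M g → M (f ≫ g)
  fact : ∀ {X Y : C} (f : X ⟶ Y), ∃ (Z : C) (e : X ⟶ Z) (m : Z ⟶ Y), E e ∧ M m ∧ e ≫ m = f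
  diag : ∀ {X Y Z W : C} (e : X ⟶ Y) (m : Z ⟶ W) (u : X ⟶ Z) (v : Y ⟶ W),
    E e → M m → e ≫ v = u ≫ m → ∃! d : Y ⟶ Z, e ≫ d = u ∧ d ≫ m = v

/-- The setting of the chosen `(E,M)`-factorizations `N Q T` of the canonical morphisms
`c_{Q,T} : ∐_Q X ⟶ ∏_T Y` induced by the language `ℓ`: for every `Q` there is a copower
`P Q` of `X` over `Q` (with injections `ι`), for every `T` a power `R T` of `Y` over `T`
(with projections `π`), and for all `Q, T` a chosen factorization
`e Q T : P Q ⟶ N Q T` in `E`, `m Q T : N Q T ⟶ R T` in `M` of `c_{Q,T}`. -/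
structure Setup (A : Type) {C : Type*} [Category C] (E M : MorphismProperty C)
    (X Y : C) (ℓ : List A → (X ⟶ Y)) where
  P : Set (List A) → C
  ι : ∀ (Q : Set (List A)) (q : List A), q ∈ Q → (X ⟶ P Q)
  hP : ∀ (Q : Set (List A)) (Z : C) (f : ∀ q : List A, q ∈ Q → (X ⟶ Z)),
    ∃! g : P Q ⟶ Z, ∀ (q : List A) (hq : q ∈ Q), ι Q q hq ≫ g = f q hq
  R : Set (List A) → C
  π : ∀ (T : Set (List A)) (t : List A), t ∈ T → (R T ⟶ Y)
  hR : ∀ (T : Set (List A)) (Z : C) (f : ∀ t : List A, t ∈ T → (Z ⟶ Y)),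
    ∃! g : Z ⟶ R T, ∀ (t : List A) (ht : t ∈ T), g ≫ π T t ht = f t ht
  N : Set (List A) → Set (List A) → C
  e : ∀ Q T : Set (List A), P Q ⟶ N Q T
  m : ∀ Q T : Set (List A), N Q T ⟶ R T
  he : ∀ Q T : Set (List A), E (e Q T)
  hm : ∀ Q T : Set (List A), M (m Q T)
  hfact : ∀ (Q T : Set (List A)) (q : List A) (hq : q ∈ Q) (t : List A) (ht : t ∈ T),
    ι Q q hq ≫ e Q T ≫ m Q T ≫ π T t ht = ℓ (q ++ t)

namespace Setup

variable {A : Type} {C : Type*} [Category C] {E M : MorphismProperty C}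
  {X Y : C} {ℓ : List A → (X ⟶ Y)}

/-- `u` is the canonical morphism `u_{Q⊆Q',T} : N Q T ⟶ N Q' T`:
it satisfies `u ∘ e_{Q,T} = e_{Q',T} ∘ (canonical inclusion)` and
`m_{Q',T} ∘ u = m_{Q,T}`. -/
def IsU (S : Setup A E M X Y ℓ) {Q Q' : Set (List A)} (T : Set (List A))
    (h : Q ⊆ Q') (u : S.N Q T ⟶ S.N Q' T) : Prop :=
  (∀ (q : List A) (hq : q ∈ Q),
    S.ι Q q hq ≫ S.e Q T ≫ u = S.ι Q' q (h hq) ≫ S.e Q' T) ∧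
  u ≫ S.m Q' T = S.m Q T

/-- `v` is the canonical morphism `v_{Q,T⊆T'} : N Q T' ⟶ N Q T`:
it satisfies `v ∘ e_{Q,T'} = e_{Q,T}` and
`m_{Q,T} ∘ v = (canonical restriction) ∘ m_{Q,T'}`. -/
def IsV (S : Setup A E M X Y ℓ) {T T' : Set (List A)} (Q : Set (List A))
    (h : T ⊆ T') (v : S.N Q T' ⟶ S.N Q T) : Prop :=
  (S.e Q T' ≫ v = S.e Q T) ∧
  (∀ (t : List A) (ht : t ∈ T),
    v ≫ S.m Q T ≫ S.π T t ht = S.m Q T' ≫ S.π T' t (h ht))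

end Setup

/-- An object `X` is `(E,M)`-noetherian: no infinite cochain of non-invertible
`E`-quotients and no infinite chain of non-invertible `M`-subobjects. -/
def Noetherian {C : Type*} [Category C] (E M : MorphismProperty C) (X : C) : Prop :=
  (¬ ∃ (Y : ℕ → C) (f : ∀ n, X ⟶ Y n) (e : ∀ n, Y (n + 1) ⟶ Y n),
    (∀ n, E (f n)) ∧ (∀ n, E (e n)) ∧
    (∀ n, f (n + 1) ≫ e n = f n) ∧ (∀ n, ¬ IsIso (e n))) ∧
  (¬ ∃ (Z : ℕ → C) (g : ∀ n, Z n ⟶ X) (m : ∀ n, Z n ⟶ Z (n + 1)),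
    (∀ n, M (g n)) ∧ (∀ n, M (m n)) ∧
    (∀ n, m n ≫ g (n + 1) = g n) ∧ (∀ n, ¬ IsIso (m n)))

/-! The morphisms `u_{Q⊆Q',T}` lie in `M`, the `v_{Q,T⊆T'}` lie in `E`, and the two kinds commute.
So `u_{Q⊆Q',T} ∘ v_{Q,T⊆List A} = v_{Q',T⊆List A} ∘ u_{Q⊆Q',List A}`: once `u_{Q⊆Q',List A}`
is invertible, `u_{Q⊆Q',T}` is in `E` by cancellation, hence invertible; dually for `v`. Along
the sequence, the `N_{Q_i, List A}` form an ascending chain of `M`-subobjects of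
`N_{List A, List A}` and the `N_{List A, T_i}` a descending chain of `E`-quotients of it, so
noetherianity makes both chains eventually stationary. -/

namespace FactSys

variable {C : Type*} [Category C] {E M : MorphismProperty C}

lemma hom_ext (fs : FactSys E M) {X Y Z W : C} {e : X ⟶ Y} {m : Z ⟶ W}
    (he : E e) (hm : M m) {d₁ d₂ : Y ⟶ Z} (h₁ : e ≫ d₁ = e ≫ d₂) (h₂ : d₁ ≫ m = d₂ ≫ m) :
    d₁ = d₂ := by
  obtain ⟨d, -, hd⟩ := fs.diag e m (e ≫ d₁) (d₁ ≫ m) he hm (Category.assoc _ _ _).symm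
  rw [hd d₁ ⟨rfl, rfl⟩, hd d₂ ⟨h₁.symm, h₂.symm⟩]

lemma isIso_of_E_of_E_comp (fs : FactSys E M) {X Y Z : C} {k : X ⟶ Y} {m : Y ⟶ Z}
    (hk : E k) (hkm : E (k ≫ m)) (hm : M m) : IsIso m := by
  obtain ⟨d, ⟨hd₁, hd₂⟩, -⟩ := fs.diag (k ≫ m) m k (𝟙 _) hkm hm (by simp)
  refine ⟨d, fs.hom_ext hk hm ?_ ?_, hd₂⟩
  · simpa using hd₁
  · simp [hd₂]

lemma isIso_of_M_comp_of_M (fs : FactSys E M) {X Y Z : C} {e : X ⟶ Y} {k : Y ⟶ Z}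
    (he : E e) (hek : M (e ≫ k)) (hk : M k) : IsIso e := by
  obtain ⟨d, ⟨hd₁, hd₂⟩, -⟩ := fs.diag e (e ≫ k) (𝟙 _) k he hek (by simp)
  refine ⟨d, hd₁, fs.hom_ext he hk ?_ ?_⟩
  · simp [reassoc_of% hd₁]
  · simpa using hd₂

lemma isIso_of_E_of_M (fs : FactSys E M) {X Y : C} {f : X ⟶ Y} (hE : E f) (hM : M f) :
    IsIso f :=
  fs.isIso_of_E_of_E_comp (fs.E_iso (𝟙 X) inferInstance) (by simpa using hE) hM

lemma E_of_comp (fs : FactSys E M) {X Y Z : C} {f : X ⟶ Y} {g : Y ⟶ Z}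
    (hfg : E (f ≫ g)) (hf : E f) : E g := by
  obtain ⟨_, e, m, he, hm, rfl⟩ := fs.fact g
  have := fs.isIso_of_E_of_E_comp (fs.E_comp _ _ hf he) (by simpa using hfg) hm
  exact fs.E_comp _ _ he (fs.E_iso m this)

lemma M_of_comp (fs : FactSys E M) {X Y Z : C} {f : X ⟶ Y} {g : Y ⟶ Z}
    (hfg : M (f ≫ g)) (hg : M g) : M f := by
  obtain ⟨_, e, m, he, hm, rfl⟩ := fs.fact f
  have := fs.isIso_of_M_comp_of_M he (by simpa using hfg) (fs.M_comp _ _ hm hg)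
  exact fs.M_comp _ _ (fs.M_iso e this) hm

end FactSys

section AscendingChainCondition

variable {C : Type*} [Category C]

def AscendingChainCondition (P : MorphismProperty C) (X : C) : Prop :=
  ¬ ∃ (Z : ℕ → C) (g : ∀ n, Z n ⟶ X) (m : ∀ n, Z n ⟶ Z (n + 1)),
    (∀ n, P (g n)) ∧ (∀ n, P (m n)) ∧
    (∀ n, m n ≫ g (n + 1) = g n) ∧ (∀ n, ¬ IsIso (m n))

variable {P : MorphismProperty C}
  (hP : ∀ {X Y Z : C} (f : X ⟶ Y) (g : Y ⟶ Z), P f → P g → P (f ≫ g))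

include hP in
lemma ofSequence_map_mem {Z : ℕ → C} {m : ∀ n, Z n ⟶ Z (n + 1)} (hm : ∀ n, P (m n))
    {a b : ℕ} (hab : a < b) : P ((Functor.ofSequence m).map (homOfLE hab.le)) := by
  induction b, hab using Nat.le_induction with
  | base =>
    rw [Functor.ofSequence_map_homOfLE_succ]
    exact hm a
  | succ b hab ih =>
    have : homOfLE (by omega : a ≤ b + 1) = homOfLE (by omega : a ≤ b) ≫ homOfLE b.le_succ :=
      rfl
    rw [this, Functor.map_comp, Functor.ofSequence_map_homOfLE_succ]
    exact hP _ _ ih (hm b)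

lemma exists_not_isIso_ofSequence_map {Z : ℕ → C} {m : ∀ n, Z n ⟶ Z (n + 1)}
    (hm : ¬ ∃ n₀ : ℕ, ∀ n ≥ n₀, IsIso (m n)) (a : ℕ) :
    ∃ b, ∃ hab : a < b, ¬ IsIso ((Functor.ofSequence m).map (homOfLE hab.le)) := by
  by_contra! H
  refine hm ⟨a, fun n han => ?_⟩
  have hn : IsIso ((Functor.ofSequence m).map (homOfLE han)) := by
    rcases han.eq_or_lt with rfl | hlt
    · simp only [homOfLE_refl, CategoryTheory.Functor.map_id]
      infer_instance
    · exact H n hlt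
  have hn' := H (n + 1) (Nat.lt_succ_of_le han)
  rw [← homOfLE_comp han n.le_succ, Functor.map_comp] at hn'
  have := IsIso.of_isIso_comp_left ((Functor.ofSequence m).map (homOfLE han))
    ((Functor.ofSequence m).map (homOfLE n.le_succ))
  rwa [Functor.ofSequence_map_homOfLE_succ] at this

include hP in
lemma AscendingChainCondition.eventually_isIso {X : C} (hX : AscendingChainCondition P X)
    {Z : ℕ → C} (g : ∀ n, Z n ⟶ X) (m : ∀ n, Z n ⟶ Z (n + 1)) (hg : ∀ n, P (g n))
    (hm : ∀ n, P (m n)) (hmg : ∀ n, m n ≫ g (n + 1) = g n) :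
    ∃ n₀ : ℕ, ∀ n ≥ n₀, IsIso (m n) := by
  by_contra hstab
  choose s hs hns using exists_not_isIso_ofSequence_map hstab
  -- the chain composed along `0 < s 0 < s (s 0) < ⋯` is strict
  let ψ : ℕ → ℕ := fun n => Nat.rec 0 (fun _ k => s k) n
  let cocone : Functor.ofSequence m ⟶ (Functor.const ℕ).obj X :=
    NatTrans.ofSequence g fun n => by
      rw [Functor.ofSequence_map_homOfLE_succ]
      exact (hmg n).trans (Category.comp_id _).symm
  exact hX ⟨fun n => Z (ψ n), fun n => g (ψ n),
    fun n => (Functor.ofSequence m).map (homOfLE (hs (ψ n)).le),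
    fun n => hg (ψ n), fun n => ofSequence_map_mem hP hm (hs (ψ n)),
    fun n => (cocone.naturality (homOfLE (hs (ψ n)).le)).trans (Category.comp_id _),
    fun n => hns (ψ n)⟩

end AscendingChainCondition

namespace Noetherian

variable {C : Type*} [Category C] {E M : MorphismProperty C} {X : C}

lemma ascendingChainCondition_op (hX : Noetherian E M X) :
    AscendingChainCondition E.op (Opposite.op X) := by
  rintro ⟨Z, g, m, hg, hm, hmg, hiso⟩
  exact hX.1 ⟨fun n => (Z n).unop, fun n => (g n).unop, fun n => (m n).unop, hg, hm,
    fun n => congrArg Quiver.Hom.unop (hmg n), fun n h => hiso n ((isIso_unop_iff _).1 h)⟩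

lemma eventually_isIso_of_quotients (fs : FactSys E M) (hX : Noetherian E M X) {Y : ℕ → C}
    (f : ∀ n, X ⟶ Y n) (e : ∀ n, Y (n + 1) ⟶ Y n) (hf : ∀ n, E (f n)) (he : ∀ n, E (e n))
    (hfe : ∀ n, f (n + 1) ≫ e n = f n) : ∃ n₀ : ℕ, ∀ n ≥ n₀, IsIso (e n) := by
  obtain ⟨n₀, hn₀⟩ := hX.ascendingChainCondition_op.eventually_isIso
    (fun f g hf hg => fs.E_comp g.unop f.unop hg hf) (fun n => (f n).op) (fun n => (e n).op)
    hf he (fun n => congrArg Quiver.Hom.op (hfe n))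
  exact ⟨n₀, fun n hn => (isIso_op_iff _).1 (hn₀ n hn)⟩

lemma eventually_isIso_of_subobjects (fs : FactSys E M) (hX : Noetherian E M X) {Z : ℕ → C}
    (g : ∀ n, Z n ⟶ X) (m : ∀ n, Z n ⟶ Z (n + 1)) (hg : ∀ n, M (g n)) (hm : ∀ n, M (m n))
    (hmg : ∀ n, m n ≫ g (n + 1) = g n) : ∃ n₀ : ℕ, ∀ n ≥ n₀, IsIso (m n) :=
  AscendingChainCondition.eventually_isIso fs.M_comp hX.2 g m hg hm hmg

end Noetherian

namespace Setup

variable {A : Type} {C : Type*} [Category C] {E M : MorphismProperty C}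
  {X Y : C} {ℓ : List A → (X ⟶ Y)} (S : Setup A E M X Y ℓ) (fs : FactSys E M)

lemma copower_hom_ext {Q : Set (List A)} {Z : C} {f g : S.P Q ⟶ Z}
    (h : ∀ q (hq : q ∈ Q), S.ι Q q hq ≫ f = S.ι Q q hq ≫ g) : f = g := by
  obtain ⟨k, -, hk⟩ := S.hP Q Z (fun q hq => S.ι Q q hq ≫ g)
  rw [hk f h, hk g fun _ _ => rfl]

lemma power_hom_ext {T : Set (List A)} {Z : C} {f g : Z ⟶ S.R T}
    (h : ∀ t (ht : t ∈ T), f ≫ S.π T t ht = g ≫ S.π T t ht) : f = g := by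
  obtain ⟨k, -, hk⟩ := S.hR T Z (fun t ht => g ≫ S.π T t ht)
  rw [hk f h, hk g fun _ _ => rfl]

section

variable {Q Q' Q'' T T' T'' : Set (List A)}

include fs in
lemma exists_isU (h : Q ⊆ Q') (T : Set (List A)) : ∃ u, S.IsU T h u := by
  obtain ⟨j, hj, -⟩ := S.hP Q (S.P Q') (fun q hq => S.ι Q' q (h hq))
  have sq : S.e Q T ≫ S.m Q T = (j ≫ S.e Q' T) ≫ S.m Q' T := by
    refine S.copower_hom_ext fun q hq => S.power_hom_ext fun t ht => ?_
    simp only [Category.assoc]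
    rw [S.hfact Q T q hq t ht, reassoc_of% (hj q hq), S.hfact Q' T q (h hq) t ht]
  obtain ⟨d, ⟨hd₁, hd₂⟩, -⟩ := fs.diag _ _ _ _ (S.he Q T) (S.hm Q' T) sq
  exact ⟨d, fun q hq => by rw [hd₁, reassoc_of% (hj q hq)], hd₂⟩

include fs in
lemma exists_isV (h : T ⊆ T') (Q : Set (List A)) : ∃ v, S.IsV Q h v := by
  obtain ⟨r, hr, -⟩ := S.hR T (S.R T') (fun t ht => S.π T' t (h ht))
  have sq : S.e Q T' ≫ (S.m Q T' ≫ r) = S.e Q T ≫ S.m Q T := by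
    refine S.copower_hom_ext fun q hq => S.power_hom_ext fun t ht => ?_
    simp only [Category.assoc]
    rw [hr t ht, S.hfact Q T' q hq t (h ht), S.hfact Q T q hq t ht]
  obtain ⟨d, ⟨hd₁, hd₂⟩, -⟩ := fs.diag _ _ _ _ (S.he Q T') (S.hm Q T) sq
  exact ⟨d, hd₁, fun t ht => by rw [reassoc_of% hd₂, hr t ht]⟩

noncomputable def u (h : Q ⊆ Q') (T : Set (List A)) : S.N Q T ⟶ S.N Q' T :=
  (S.exists_isU fs h T).choose

noncomputable def v (h : T ⊆ T') (Q : Set (List A)) : S.N Q T' ⟶ S.N Q T :=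
  (S.exists_isV fs h Q).choose

lemma isU_u (h : Q ⊆ Q') (T : Set (List A)) : S.IsU T h (S.u fs h T) :=
  (S.exists_isU fs h T).choose_spec

lemma isV_v (h : T ⊆ T') (Q : Set (List A)) : S.IsV Q h (S.v fs h Q) :=
  (S.exists_isV fs h Q).choose_spec

include fs in
lemma isU_unique {h : Q ⊆ Q'} {u₁ u₂ : S.N Q T ⟶ S.N Q' T} (h₁ : S.IsU T h u₁)
    (h₂ : S.IsU T h u₂) : u₁ = u₂ := by
  refine fs.hom_ext (S.he Q T) (S.hm Q' T) (S.copower_hom_ext fun q hq => ?_)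
    (h₁.2.trans h₂.2.symm)
  exact (h₁.1 q hq).trans (h₂.1 q hq).symm

include fs in
lemma isV_unique {h : T ⊆ T'} {v₁ v₂ : S.N Q T' ⟶ S.N Q T} (h₁ : S.IsV Q h v₁)
    (h₂ : S.IsV Q h v₂) : v₁ = v₂ := by
  refine fs.hom_ext (S.he Q T') (S.hm Q T) (h₁.1.trans h₂.1.symm)
    (S.power_hom_ext fun t ht => ?_)
  simpa only [Category.assoc] using (h₁.2 t ht).trans (h₂.2 t ht).symm

lemma isU_comp {h₁ : Q ⊆ Q'} {h₂ : Q' ⊆ Q''} {u₁ : S.N Q T ⟶ S.N Q' T}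
    {u₂ : S.N Q' T ⟶ S.N Q'' T} (hu₁ : S.IsU T h₁ u₁) (hu₂ : S.IsU T h₂ u₂) :
    S.IsU T (h₁.trans h₂) (u₁ ≫ u₂) := by
  refine ⟨fun q hq => ?_, by rw [Category.assoc, hu₂.2, hu₁.2]⟩
  rw [reassoc_of% (hu₁.1 q hq), hu₂.1 q (h₁ hq)]

lemma isV_comp {h₁ : T ⊆ T'} {h₂ : T' ⊆ T''} {v₁ : S.N Q T' ⟶ S.N Q T}
    {v₂ : S.N Q T'' ⟶ S.N Q T'} (hv₁ : S.IsV Q h₁ v₁) (hv₂ : S.IsV Q h₂ v₂) :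
    S.IsV Q (h₁.trans h₂) (v₂ ≫ v₁) := by
  refine ⟨by rw [reassoc_of% hv₂.1, hv₁.1], fun t ht => ?_⟩
  rw [Category.assoc, hv₁.2 t ht, hv₂.2 t (h₁ ht)]

lemma u_comp (h₁ : Q ⊆ Q') (h₂ : Q' ⊆ Q'') (T : Set (List A)) :
    S.u fs h₁ T ≫ S.u fs h₂ T = S.u fs (h₁.trans h₂) T :=
  S.isU_unique fs (S.isU_comp (S.isU_u fs h₁ T) (S.isU_u fs h₂ T)) (S.isU_u fs _ T)

lemma v_comp (h₁ : T ⊆ T') (h₂ : T' ⊆ T'') (Q : Set (List A)) :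
    S.v fs h₂ Q ≫ S.v fs h₁ Q = S.v fs (h₁.trans h₂) Q :=
  S.isV_unique fs (S.isV_comp (S.isV_v fs h₁ Q) (S.isV_v fs h₂ Q)) (S.isV_v fs _ Q)

include fs in
lemma M_of_isU {h : Q ⊆ Q'} {u : S.N Q T ⟶ S.N Q' T} (hu : S.IsU T h u) : M u :=
  fs.M_of_comp (hu.2 ▸ S.hm Q T) (S.hm Q' T)

include fs in
lemma E_of_isV {h : T ⊆ T'} {v : S.N Q T' ⟶ S.N Q T} (hv : S.IsV Q h v) : E v :=
  fs.E_of_comp (hv.1 ▸ S.he Q T) (S.he Q T')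

include fs in
lemma isV_comp_isU {hQ : Q ⊆ Q'} {hT : T ⊆ T'} {u : S.N Q T ⟶ S.N Q' T}
    {u' : S.N Q T' ⟶ S.N Q' T'} {v : S.N Q T' ⟶ S.N Q T} {v' : S.N Q' T' ⟶ S.N Q' T}
    (hu : S.IsU T hQ u) (hu' : S.IsU T' hQ u') (hv : S.IsV Q hT v) (hv' : S.IsV Q' hT v') :
    v ≫ u = u' ≫ v' := by
  refine fs.hom_ext (S.he Q T') (S.hm Q' T) (S.copower_hom_ext fun q hq => ?_)
    (S.power_hom_ext fun t ht => ?_)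
  · rw [reassoc_of% hv.1, hu.1 q hq, reassoc_of% (hu'.1 q hq), hv'.1]
  · simp only [Category.assoc]
    rw [hv'.2 t ht, reassoc_of% hu'.2, ← hv.2 t ht, reassoc_of% hu.2]

lemma isIso_of_isU {h : Q ⊆ Q'} {u : S.N Q T ⟶ S.N Q' T} (hu : S.IsU T h u)
    (hiso : IsIso (S.u fs h Set.univ)) : IsIso u := by
  have hv := S.isV_v fs (Set.subset_univ T) Q
  have hv' := S.isV_v fs (Set.subset_univ T) Q'
  have hE : E (S.v fs (Set.subset_univ T) Q ≫ u) := by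
    rw [S.isV_comp_isU fs hu (S.isU_u fs h _) hv hv']
    exact fs.E_comp _ _ (fs.E_iso _ hiso) (S.E_of_isV fs hv')
  exact fs.isIso_of_E_of_M (fs.E_of_comp hE (S.E_of_isV fs hv)) (S.M_of_isU fs hu)

lemma isIso_of_isV {h : T ⊆ T'} {v : S.N Q T' ⟶ S.N Q T} (hv : S.IsV Q h v)
    (hiso : IsIso (S.v fs h Set.univ)) : IsIso v := by
  have hu := S.isU_u fs (Set.subset_univ Q) T
  have hu' := S.isU_u fs (Set.subset_univ Q) T'
  have hM : M (v ≫ S.u fs (Set.subset_univ Q) T) := by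
    rw [S.isV_comp_isU fs hu hu' hv (S.isV_v fs h _)]
    exact fs.M_comp _ _ (S.M_of_isU fs hu') (fs.M_iso _ hiso)
  exact fs.isIso_of_E_of_M (S.E_of_isV fs hv) (fs.M_of_comp hM (S.M_of_isU fs hu))

end

lemma eventually_isIso_u (hX : Noetherian E M (S.N Set.univ Set.univ)) {Q : ℕ → Set (List A)}
    (hQ : Monotone Q) : ∃ n₀ : ℕ, ∀ n ≥ n₀, IsIso (S.u fs (hQ n.le_succ) Set.univ) :=
  hX.eventually_isIso_of_subobjects fs (fun n => S.u fs (Set.subset_univ (Q n)) Set.univ)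
    (fun n => S.u fs (hQ n.le_succ) Set.univ) (fun _ => S.M_of_isU fs (S.isU_u fs _ _))
    (fun _ => S.M_of_isU fs (S.isU_u fs _ _)) (fun _ => S.u_comp fs _ _ _)

lemma eventually_isIso_v (hX : Noetherian E M (S.N Set.univ Set.univ)) {T : ℕ → Set (List A)}
    (hT : Monotone T) : ∃ n₀ : ℕ, ∀ n ≥ n₀, IsIso (S.v fs (hT n.le_succ) Set.univ) :=
  hX.eventually_isIso_of_quotients fs (fun n => S.v fs (Set.subset_univ (T n)) Set.univ)
    (fun n => S.v fs (hT n.le_succ) Set.univ) (fun _ => S.E_of_isV fs (S.isV_v fs _ _))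
    (fun _ => S.E_of_isV fs (S.isV_v fs _ _)) (fun _ => S.v_comp fs _ _ _)

end Setup

theorem stmt17_general {A : Type} {C : Type*} [Category C]
    (E M : MorphismProperty C) (fs : FactSys E M) {X Y : C}
    (ℓ : List A → (X ⟶ Y)) (S : Setup A E M X Y ℓ)
    (hnoeth : Noetherian E M (S.N Set.univ Set.univ))
    (Q T : ℕ → Set (List A))
    (hstep : ∀ i, (Q i ⊆ Q (i + 1) ∧ T i = T (i + 1)) ∨
      (Q i = Q (i + 1) ∧ T i ⊆ T (i + 1))) :
    ∃ n₀ : ℕ, ∀ i ≥ n₀,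
      (∀ hQ : Q i ⊆ Q (i + 1), T i = T (i + 1) →
        ∀ u : S.N (Q i) (T i) ⟶ S.N (Q (i + 1)) (T i),
          S.IsU (T i) hQ u → IsIso u) ∧
      (∀ hT : T i ⊆ T (i + 1), Q i = Q (i + 1) →
        ∀ v : S.N (Q i) (T (i + 1)) ⟶ S.N (Q i) (T i),
          S.IsV (Q i) hT v → IsIso v) := by
  have hQ : Monotone Q := monotone_nat_of_le_succ fun i => (hstep i).elim (·.1) (·.1.le)
  have hT : Monotone T := monotone_nat_of_le_succ fun i => (hstep i).elim (·.2.le) (·.2)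
  obtain ⟨n₁, hn₁⟩ := S.eventually_isIso_u fs hnoeth hQ
  obtain ⟨n₂, hn₂⟩ := S.eventually_isIso_v fs hnoeth hT
  refine ⟨max n₁ n₂, fun i hi => ⟨fun _ _ u hu => ?_, fun _ _ v hv => ?_⟩⟩
  · exact S.isIso_of_isU fs hu (hn₁ i (le_of_max_le_left hi))
  · exact S.isIso_of_isV fs hv (hn₂ i (le_of_max_le_right hi))

/-- along a sequence of pairs `(Q_i, T_i)` in which at each step either
`Q` grows (and `T` stays fixed) or `T` grows (and `Q` stays fixed), all but finitely
many of the corresponding canonical morphisms between the factorizations `N Q T` are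
isomorphisms, provided `N (List A) (List A)` is `(E,M)`-noetherian. -/
theorem stmt17 {A : Type} [Fintype A] {C : Type*} [Category C]
    (E M : MorphismProperty C) (fs : FactSys E M) {X Y : C}
    (ℓ : List A → (X ⟶ Y)) (S : Setup A E M X Y ℓ)
    (hnoeth : Noetherian E M (S.N Set.univ Set.univ))
    (Q T : ℕ → Set (List A))
    (hstep : ∀ i, (Q i ⊆ Q (i + 1) ∧ T i = T (i + 1)) ∨
      (Q i = Q (i + 1) ∧ T i ⊆ T (i + 1))) :
    ∃ n₀ : ℕ, ∀ i ≥ n₀,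
      (∀ hQ : Q i ⊆ Q (i + 1), T i = T (i + 1) →
        ∀ u : S.N (Q i) (T i) ⟶ S.N (Q (i + 1)) (T i),
          S.IsU (T i) hQ u → IsIso u) ∧
      (∀ hT : T i ⊆ T (i + 1), Q i = Q (i + 1) →
        ∀ v : S.N (Q i) (T (i + 1)) ⟶ S.N (Q i) (T i),
          S.IsV (Q i) hT v → IsIso v) :=
  stmt17_general E M fs ℓ S hnoeth Q T hstep
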